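/- (Coercivity of B in the broken H¹ norm) For every v ∈ H²(P_h), the bilinear form satisfies B(v,v) = Σ_{E∈P_h} ‖v‖_*² + σ(h^λ/p^ζ)‖[K∇v·n]‖²_{L²(Γ_int)}; in particular, if 0 < K₀ ≤ K(x) ≤ K₁ a.e. and σ > 0, then B(v,v) ≥ min{K₀,1} ‖v‖²_{H¹(P_h)}. -/

import Mathlib

noncomputable section

open MeasureTheory Finset RealInnerProductSpace

/-- The plane `ℝ²`. -/
abbrev V2 : Type := EuclideanSpace ℝ (Fin 2)

/-- Squared `L²(E)` norm. -/
def L2Sq (E : Set V2) (f : V2 → ℝ) : ℝ := ∫ x in E, (f x) ^ 2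

/-- Squared `L²(E)` norm of the gradient. -/
def gradL2Sq (E : Set V2) (f : V2 → ℝ) : ℝ := ∫ x in E, ‖gradient f x‖ ^ 2

/-- Squared `L²(E)` norm of the matrix of second derivatives. -/
def hessL2Sq (E : Set V2) (f : V2 → ℝ) : ℝ := ∫ x in E, ‖iteratedFDeriv ℝ 2 f x‖ ^ 2

/-- Squared Sobolev `H^k(E)` norm. -/
def sobSq (E : Set V2) (k : ℕ) (f : V2 → ℝ) : ℝ :=
  ∑ m ∈ Finset.range (k + 1), ∫ x in E, ‖iteratedFDeriv ℝ m f x‖ ^ 2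

/-- Membership in (a strong version of) the Sobolev space `H^k(E)`:
`f` is `k` times differentiable with all derivatives up to order `k`
square integrable on `E`. -/
def MemH (E : Set V2) (k : ℕ) (f : V2 → ℝ) : Prop :=
  ContDiff ℝ k f ∧
    ∀ m ≤ k, MemLp (fun x => ‖iteratedFDeriv ℝ m f x‖) 2 (volume.restrict E)

/-- The weighted "star" norm squared:
`‖v‖_*² = ∫_E K |∇v|² dx + ∫_E |v|² dx`. -/
def starSq (E : Set V2) (K : V2 → ℝ) (f : V2 → ℝ) : ℝ :=
  (∫ x in E, K x * ‖gradient f x‖ ^ 2) + ∫ x in E, (f x) ^ 2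

/-- The `H^{-1/2}(∂E)` dual norm of a function `u` on the boundary of `E`:
`‖u‖_{H^{-1/2}(∂E)} = sup_{φ ∈ H^{1/2}(∂E)} |⟨u,φ⟩|/‖φ‖_{H^{1/2}(∂E)}`, where
`‖φ‖_{H^{1/2}(∂E)} = inf{ ‖w‖_* : w ∈ H¹(E), trace w = φ }`; combining the
supremum and infimum this equals `sup_{w ∈ H¹(E)} |∫_{∂E} u w ds| / ‖w‖_*`.
The boundary carries the one-dimensional Hausdorff (arc-length) measure. -/
def dualHalfNorm (E : Set V2) (K : V2 → ℝ) (u : V2 → ℝ) : ℝ :=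
  ⨆ w : {w : V2 → ℝ // MemH E 1 w},
    |∫ x in frontier E, u x * w.1 x ∂μH[1]| / Real.sqrt (starSq E K w.1)

/-- `f` is (the restriction of) a real polynomial of total degree at most `m`. -/
def IsPolyDeg (m : ℕ) (f : V2 → ℝ) : Prop :=
  ∃ q : MvPolynomial (Fin 2) ℝ, q.totalDegree ≤ m ∧
    ∀ x : V2, f x = MvPolynomial.eval (fun j => x j) q

/-- Shape regularity with parameter `ρ`: `E` contains a ball of radius `diam E / ρ`. -/
def ShapeReg (ρ : ℝ) (E : Set V2) : Prop :=
  ∃ x₀ : V2, Metric.ball x₀ (Metric.diam E / ρ) ⊆ E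

/-- `ν` is a unit normal field on the boundary of `E`. -/
def UnitNormalOn (E : Set V2) (ν : V2 → V2) : Prop :=
  ∀ x ∈ frontier E, ‖ν x‖ = 1

/-- A reference element: a nonempty bounded open set. -/
def IsRefElt (Eh : Set V2) : Prop :=
  IsOpen Eh ∧ Bornology.IsBounded Eh ∧ Eh.Nonempty

/-- `G` is a description of the boundary of `E` as a finite union of
(nondegenerate) straight edges, overlapping only in arc-length measure zero. -/
def IsPolygonalBdry (E : Set V2) (G : Finset (Set V2)) : Prop :=
  (⋃ γ ∈ G, γ) = frontier E ∧
  (∀ γ ∈ G, ∃ a b : V2, a ≠ b ∧ γ = segment ℝ a b) ∧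
  ∀ γ ∈ G, ∀ γ' ∈ G, γ ≠ γ' → μH[1] (γ ∩ γ') = 0

/-- Divergence of a vector field on `ℝ²`. -/
def divg (F : V2 → V2) (x : V2) : ℝ :=
  ∑ j : Fin 2, fderiv ℝ F x (EuclideanSpace.single j 1) j

/-- Sum over ordered pairs `j < i` of element indices (sum over the
interior interfaces `Γ_{ij}` of a partition, each counted once). -/
def interSum {N : ℕ} (F : Fin N → Fin N → ℝ) : ℝ :=
  ∑ i : Fin N, ∑ j : Fin N, if j < i then F i j else 0

/-- The minimum of the elementwise Sobolev regularity indices. -/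
def gmin {N : ℕ} (γk : Fin N → ℕ) : ℕ := ⨅ i, γk i

/-- The average `⟨v⟩` of a broken function across the interface `Γ_{ij}`. -/
def bavg {N : ℕ} (v : Fin N → V2 → ℝ) (i j : Fin N) (x : V2) : ℝ := (v i x + v j x) / 2

/-- The jump `[v]` of a broken function across `Γ_{ij}` (for `j < i`). -/
def bjump {N : ℕ} (v : Fin N → V2 → ℝ) (i j : Fin N) (x : V2) : ℝ := v i x - v j x

/-- The setting of the stabilized discontinuous Galerkin method:
a regular partition `El 0, …, El (N-1)` of a bounded Lipschitz domain `Ω ⊆ ℝ²`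
into open elements, each the image of a fixed reference element `Eref` under an
invertible affine map `Fmap i`, with local polynomial degrees `deg i ≥ 1`,
a diffusion coefficient `K` with `0 < K₀ ≤ K ≤ K₁` a.e., outward unit normal
fields `ν i` on the element boundaries (opposite on shared interfaces),
and parameters `σ > 0`, `lam (=λ), ζ, nuP (=ν), θ ≥ 0`. -/
structure DG (N : ℕ) where
  Ω : Set V2
  El : Fin N → Set V2
  Eref : Set V2
  Fmap : Fin N → (V2 ≃ᵃ[ℝ] V2)
  deg : Fin N → ℕ
  K : V2 → ℝ
  K₀ : ℝ
  K₁ : ℝ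
  ν : Fin N → V2 → V2
  σ : ℝ
  lam : ℝ
  ζ : ℝ
  nuP : ℝ
  θ : ℝ
  hΩopen : IsOpen Ω
  hΩbdd : Bornology.IsBounded Ω
  hopen : ∀ i, IsOpen (El i)
  hdisj : ∀ i j, i ≠ j → El i ∩ El j = ∅
  hcover : Ω = interior (⋃ i, closure (El i))
  href : IsRefElt Eref
  hmap : ∀ i, El i = (Fmap i) '' Eref
  hfrontier : ∀ i, μH[1] (frontier (El i)) < ⊤
  hdeg : ∀ i, 1 ≤ deg i
  hK₀ : 0 < K₀
  hKmeas : Measurable K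
  hKbd : ∀ᵐ x ∂(volume.restrict Ω), K₀ ≤ K x ∧ K x ≤ K₁
  hν : ∀ i, UnitNormalOn (El i) (ν i)
  hνopp : ∀ i j, i ≠ j → ∀ x ∈ frontier (El i) ∩ frontier (El j), ν i x = - ν j x
  hσ : 0 < σ
  hlam : 0 ≤ lam
  hζ : 0 ≤ ζ
  hnuP : 0 ≤ nuP
  hθ : 0 ≤ θ

namespace DG

variable {N : ℕ} (S : DG N)

/-- The mesh size `h = max_E diam E`. -/
def hmax : ℝ := ⨆ i, Metric.diam (S.El i)

/-- The minimal polynomial degree `p = min_E p_E`. -/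
def pmin : ℕ := ⨅ i, S.deg i

/-- The stabilization factor `σ h^λ / p^ζ`. -/
def stab : ℝ := S.σ * S.hmax ^ S.lam / (S.pmin : ℝ) ^ S.ζ

/-- The interface `Γ_{ij}` between elements `i` and `j`. -/
def edge (i j : Fin N) : Set V2 := frontier (S.El i) ∩ frontier (S.El j)

/-- For `j < i`, the jump `[K ∇v ⬝ n]` of the normal flux of a broken
function `v` on `Γ_{ij}`, where `n = ν i` points outward from the element
with the higher index. -/
def fluxJump (v : Fin N → V2 → ℝ) (i j : Fin N) (x : V2) : ℝ :=
  S.K x * ⟪gradient (v i) x, S.ν i x⟫ - S.K x * ⟪gradient (v j) x, S.ν i x⟫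

/-- `‖[K ∇v ⬝ n]‖²_{L²(Γ_int)}`: the squared `L²` norm over the interior
interfaces of the normal-flux jumps. -/
def fluxJumpL2Sq (v : Fin N → V2 → ℝ) : ℝ :=
  interSum (fun i j => ∫ x in S.edge i j, (S.fluxJump v i j x) ^ 2 ∂μH[1])

/-- The stabilized DG bilinear form `B(u,v)`. -/
def Bform (u v : Fin N → V2 → ℝ) : ℝ :=
  (∑ i : Fin N,
    ((∫ x in S.El i,
        (S.K x * ⟪gradient (u i) x, gradient (v i) x⟫ + u i x * v i x))
      - ∫ x in frontier (S.El i),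
          (v i x * (S.K x * ⟪gradient (u i) x, S.ν i x⟫)
            - u i x * (S.K x * ⟪gradient (v i) x, S.ν i x⟫)) ∂μH[1]))
  + interSum (fun i j => ∫ x in S.edge i j,
      (bavg v i j x * S.fluxJump u i j x - bavg u i j x * S.fluxJump v i j x) ∂μH[1])
  + S.stab * interSum (fun i j => ∫ x in S.edge i j,
      S.fluxJump u i j x * S.fluxJump v i j x ∂μH[1])

/-- The load functional `L(v) = ∫_Ω f v dx` (elementwise). -/
def Lform (f : V2 → ℝ) (v : Fin N → V2 → ℝ) : ℝ :=
  ∑ i : Fin N, ∫ x in S.El i, f x * v i x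

/-- Membership in the discrete space `V^{hp}` of piecewise polynomials of
local degree at most `deg i`. -/
def MemVhp (v : Fin N → V2 → ℝ) : Prop := ∀ i, IsPolyDeg (S.deg i) (v i)

/-- Membership in the broken space (elementwise `H²`); this represents the
broken test space `M(P_h)` (dense in its completion `V`). -/
def MemBroken (v : Fin N → V2 → ℝ) : Prop := ∀ i, MemH (S.El i) 2 (v i)

/-- The DG energy norm squared
`|||v|||² = Σ_E { ‖v‖_*² + (h^ν/p^θ) ‖K∇v⬝μ‖²_{H^{-1/2}(∂E)} } + σ (h^λ/p^ζ) ‖[K∇v⬝n]‖²_{L²(Γ_int)}`. -/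
def tnormSq (v : Fin N → V2 → ℝ) : ℝ :=
  (∑ i : Fin N, (starSq (S.El i) S.K (v i)
    + S.hmax ^ S.nuP / (S.pmin : ℝ) ^ S.θ *
        (dualHalfNorm (S.El i) S.K
          (fun x => S.K x * ⟪gradient (v i) x, S.ν i x⟫)) ^ 2))
  + S.stab * S.fluxJumpL2Sq v

/-- The broken `H¹(P_h)` norm squared. -/
def brokenH1Sq (v : Fin N → V2 → ℝ) : ℝ :=
  ∑ i : Fin N, (L2Sq (S.El i) (v i) + gradL2Sq (S.El i) (v i))

/-- The broken `H^{γ_k}(P_h)` norm squared, with elementwise regularity `γk i`. -/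
def brokenSobSq (γk : Fin N → ℕ) (v : Fin N → V2 → ℝ) : ℝ :=
  ∑ i : Fin N, sobSq (S.El i) (γk i) (v i)

/-- The norm `|||v|||²_{H²(P_h)} = Σ_E { ‖v‖_*² + (p^ζ/(σh^λ))‖v‖²_{L²(∂E)}
+ (σh^λ/p^ζ)‖∇v⬝μ‖²_{L²(∂E)} }`. -/
def tnormH2Sq (v : Fin N → V2 → ℝ) : ℝ :=
  ∑ i : Fin N, (starSq (S.El i) S.K (v i)
    + (S.pmin : ℝ) ^ S.ζ / (S.σ * S.hmax ^ S.lam) *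
        (∫ x in frontier (S.El i), (v i x) ^ 2 ∂μH[1])
    + S.σ * S.hmax ^ S.lam / (S.pmin : ℝ) ^ S.ζ *
        (∫ x in frontier (S.El i), ⟪gradient (v i) x, S.ν i x⟫ ^ 2 ∂μH[1]))

/-- The piecewise average `v̄` of a broken function: `v̄|_E = (1/|E|)∫_E v`. -/
def pieceAvg (v : Fin N → V2 → ℝ) : Fin N → V2 → ℝ :=
  fun i _ => (∫ x in S.El i, v i x) / (volume (S.El i)).toReal

end DG

/-!
In `B(v, v)` the element-boundary terms `v K∇v·μ - v K∇v·μ` and the interface terms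
`⟨v⟩[K∇v·n] - ⟨v⟩[K∇v·n]` cancel pointwise, since `B` is antisymmetric in these terms.
What remains is `Σ_E ‖v‖_*²` plus the nonnegative jump penalty, and
`K ≥ K₀` turns `‖v‖_*²` into at least `min{K₀, 1}` times the squared `H¹(E)` norm.
-/

theorem norm_gradient_eq_norm_fderiv {F : Type*} [NormedAddCommGroup F]
    [InnerProductSpace ℝ F] [CompleteSpace F] (f : F → ℝ) (x : F) :
    ‖gradient f x‖ = ‖fderiv ℝ f x‖ :=
  (InnerProductSpace.toDual ℝ F).symm.norm_map _

theorem interSum_zero {N : ℕ} : interSum (fun _ _ : Fin N => (0 : ℝ)) = 0 := by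
  simp [interSum]

theorem interSum_nonneg {N : ℕ} {F : Fin N → Fin N → ℝ}
    (h : ∀ i j, j < i → 0 ≤ F i j) : 0 ≤ interSum F :=
  Finset.sum_nonneg fun i _ => Finset.sum_nonneg fun j _ => by
    split_ifs with hji
    exacts [h i j hji, le_rfl]

namespace MemH

variable {E : Set V2} {k : ℕ} {f : V2 → ℝ}

theorem integrable_sq (hf : MemH E k f) :
    Integrable (fun x => f x ^ 2) (volume.restrict E) := by
  simpa only [norm_iteratedFDeriv_zero, Real.norm_eq_abs, sq_abs] using
    (hf.2 0 k.zero_le).integrable_sq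

theorem memLp_norm_gradient (hf : MemH E k f) (hk : 1 ≤ k) :
    MemLp (fun x => ‖gradient f x‖) 2 (volume.restrict E) := by
  simpa only [norm_iteratedFDeriv_one, ← norm_gradient_eq_norm_fderiv] using hf.2 1 hk

end MemH

section StarNorm

variable {E : Set V2} {K f : V2 → ℝ} {K₀ K₁ : ℝ}

theorem integrable_mul_norm_gradient_sq (hK : Measurable K)
    (hKbd : ∀ᵐ x ∂(volume.restrict E), 0 ≤ K x ∧ K x ≤ K₁)
    (hf : MemLp (fun x => ‖gradient f x‖) 2 (volume.restrict E)) :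
    Integrable (fun x => K x * ‖gradient f x‖ ^ 2) (volume.restrict E) :=
  hf.integrable_sq.bdd_mul hK.aestronglyMeasurable <| by
    filter_upwards [hKbd] with x hx
    rw [Real.norm_eq_abs, abs_of_nonneg hx.1]
    exact hx.2

theorem setIntegral_mul_inner_self_add_mul_self
    (hKg : Integrable (fun x => K x * ‖gradient f x‖ ^ 2) (volume.restrict E))
    (hf : Integrable (fun x => f x ^ 2) (volume.restrict E)) :
    ∫ x in E, (K x * ⟪gradient f x, gradient f x⟫ + f x * f x) = starSq E K f := by
  simp only [real_inner_self_eq_norm_sq, ← sq]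
  exact integral_add hKg hf

theorem min_mul_add_le_starSq (hK₀ : ∀ᵐ x ∂(volume.restrict E), K₀ ≤ K x)
    (hg : Integrable (fun x => ‖gradient f x‖ ^ 2) (volume.restrict E))
    (hKg : Integrable (fun x => K x * ‖gradient f x‖ ^ 2) (volume.restrict E)) :
    min K₀ 1 * (L2Sq E f + gradL2Sq E f) ≤ starSq E K f := by
  have hL2 : 0 ≤ L2Sq E f := integral_nonneg fun x => sq_nonneg _
  have hgrad : 0 ≤ gradL2Sq E f := integral_nonneg fun x => sq_nonneg _
  have hweighted : K₀ * gradL2Sq E f ≤ ∫ x in E, K x * ‖gradient f x‖ ^ 2 := by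
    rw [gradL2Sq, ← integral_const_mul]
    refine integral_mono_ae (hg.const_mul K₀) hKg ?_
    filter_upwards [hK₀] with x hx
    exact mul_le_mul_of_nonneg_right hx (sq_nonneg _)
  calc min K₀ 1 * (L2Sq E f + gradL2Sq E f)
      = min K₀ 1 * gradL2Sq E f + min K₀ 1 * L2Sq E f := by ring
    _ ≤ K₀ * gradL2Sq E f + 1 * L2Sq E f := by
        gcongr
        exacts [min_le_left _ _, min_le_right _ _]
    _ ≤ starSq E K f := by rw [starSq, one_mul, L2Sq]; gcongr

end StarNorm

namespace DG

variable {N : ℕ} (S : DG N)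

theorem El_subset_Ω (i : Fin N) : S.El i ⊆ S.Ω := by
  rw [S.hcover]
  exact (S.hopen i).subset_interior_iff.mpr
    (subset_closure.trans (Set.subset_iUnion (fun j => closure (S.El j)) i))

theorem ae_K_mem_Icc_El (i : Fin N) :
    ∀ᵐ x ∂(volume.restrict (S.El i)), S.K₀ ≤ S.K x ∧ S.K x ≤ S.K₁ :=
  ae_restrict_of_ae_restrict_of_subset (S.El_subset_Ω i) S.hKbd

theorem integrable_K_mul_norm_gradient_sq {i : Fin N} {f : V2 → ℝ}
    (hf : MemLp (fun x => ‖gradient f x‖) 2 (volume.restrict (S.El i))) :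
    Integrable (fun x => S.K x * ‖gradient f x‖ ^ 2) (volume.restrict (S.El i)) :=
  integrable_mul_norm_gradient_sq S.hKmeas
    ((S.ae_K_mem_Icc_El i).mono fun _ hx => ⟨S.hK₀.le.trans hx.1, hx.2⟩) hf

theorem stab_nonneg : 0 ≤ S.stab :=
  div_nonneg (mul_nonneg S.hσ.le
      (Real.rpow_nonneg (Real.iSup_nonneg fun _ => Metric.diam_nonneg) _))
    (Real.rpow_nonneg (Nat.cast_nonneg _) _)

theorem fluxJumpL2Sq_nonneg (v : Fin N → V2 → ℝ) : 0 ≤ S.fluxJumpL2Sq v :=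
  interSum_nonneg fun _ _ _ => integral_nonneg fun _ => sq_nonneg _

theorem Bform_self (v : Fin N → V2 → ℝ) :
    S.Bform v v =
      (∑ i : Fin N, ∫ x in S.El i,
        (S.K x * ⟪gradient (v i) x, gradient (v i) x⟫ + v i x * v i x))
      + S.stab * S.fluxJumpL2Sq v := by
  simp only [Bform, fluxJumpL2Sq, sub_self, integral_zero, sub_zero, interSum_zero, add_zero, sq]

theorem Bform_self_eq_of_memBroken {v : Fin N → V2 → ℝ} (hv : S.MemBroken v) :
    S.Bform v v = (∑ i : Fin N, starSq (S.El i) S.K (v i)) + S.stab * S.fluxJumpL2Sq v := by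
  rw [Bform_self]
  congr 2 with i
  exact setIntegral_mul_inner_self_add_mul_self
    (S.integrable_K_mul_norm_gradient_sq ((hv i).memLp_norm_gradient one_le_two))
    (hv i).integrable_sq

end DG

/-- coercivity identity for the DG bilinear form: for every
`v ∈ H²(P_h)`, `B(v,v) = Σ_E ‖v‖_*² + σ(h^λ/p^ζ)‖[K∇v⬝n]‖²_{L²(Γ_int)}`, and
consequently `B(v,v) ≥ min{K₀,1} ‖v‖²_{H¹(P_h)}`. -/
theorem stmt_14 {N : ℕ} (S : DG N) (v : Fin N → V2 → ℝ) (hv : S.MemBroken v) :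
    S.Bform v v =
        (∑ i : Fin N, starSq (S.El i) S.K (v i)) + S.stab * S.fluxJumpL2Sq v ∧
      S.Bform v v ≥ min S.K₀ 1 * S.brokenH1Sq v := by
  have hB := S.Bform_self_eq_of_memBroken hv
  refine ⟨hB, ?_⟩
  have helement : ∀ i, min S.K₀ 1 * (L2Sq (S.El i) (v i) + gradL2Sq (S.El i) (v i)) ≤
      starSq (S.El i) S.K (v i) := fun i => by
    have hgrad := (hv i).memLp_norm_gradient one_le_two
    exact min_mul_add_le_starSq ((S.ae_K_mem_Icc_El i).mono fun _ hx => hx.1)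
      hgrad.integrable_sq (S.integrable_K_mul_norm_gradient_sq hgrad)
  calc min S.K₀ 1 * S.brokenH1Sq v
      ≤ ∑ i : Fin N, starSq (S.El i) S.K (v i) := by
        rw [DG.brokenH1Sq, Finset.mul_sum]
        exact Finset.sum_le_sum fun i _ => helement i
    _ ≤ S.Bform v v := by
        rw [hB]
        exact le_add_of_nonneg_right (mul_nonneg S.stab_nonneg (S.fluxJumpL2Sq_nonneg v))
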